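/- Let s ∈ ℝ, p ∈ (0,∞), q ∈ (0,∞], τ ∈ [0,∞). For the sequence norm ‖t‖_{ḟ^{s,τ}_{p,q}} = sup over dyadic cubes P of |P|^{-τ} ( ∫_P ( Σ_{Q⊂P dyadic} [ |Q|^{-s/n-1/2} |t_Q| χ_Q(x) ]^q )^{p/q} dx )^{1/p}, and the norm ‖t‖_{ḟ^{s+n(τ-1/p)}_{∞,∞}} = sup over dyadic cubes Q of |Q|^{-s/n-(τ-1/p)-1/2} |t_Q|, one always has ‖t‖_{ḟ^{s+n(τ-1/p)}_{∞,∞}} ≤ ‖t‖_{ḟ^{s,τ}_{p,q}} for every sequence t = {t_Q} indexed by dyadic cubes. -/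

import Mathlib

open MeasureTheory ENNReal

/-- A dyadic cube `Q_{jk} = 2^{-j}([0,1)^n + k)` in `ℝⁿ`, recorded by its
generation `j ∈ ℤ` and position `k ∈ ℤⁿ`. -/
structure DyadicCube (n : ℕ) where
  j : ℤ
  k : Fin n → ℤ

namespace DyadicCube

/-- The dyadic cube as a subset of `ℝⁿ`. -/
def toSet {n : ℕ} (Q : DyadicCube n) : Set (Fin n → ℝ) :=
  {x | ∀ i, (Q.k i : ℝ) * (2 : ℝ) ^ (-Q.j) ≤ x i ∧
        x i < ((Q.k i : ℝ) + 1) * (2 : ℝ) ^ (-Q.j)}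

/-- The Lebesgue measure `|Q| = 2^{-jn}` of a dyadic cube, as an element of `ℝ≥0∞`. -/
noncomputable def vol {n : ℕ} (Q : DyadicCube n) : ℝ≥0∞ :=
  (2 : ℝ≥0∞) ^ (-(Q.j : ℝ) * n)

/-- The characteristic function `χ_Q`, with values in `ℝ≥0∞`. -/
noncomputable def ind {n : ℕ} (Q : DyadicCube n) (x : Fin n → ℝ) : ℝ≥0∞ :=
  Q.toSet.indicator (fun _ => (1 : ℝ≥0∞)) x

end DyadicCube

open DyadicCube

/-- The coefficient `|Q|^{-s/n - 1/2}`. -/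
noncomputable def coeff {n : ℕ} (s : ℝ) (Q : DyadicCube n) : ℝ≥0∞ :=
  Q.vol ^ (-(s / (n : ℝ)) - 1 / 2)

/-- The `ℓ^q`-norm `(Σ_i a_i^q)^{1/q}` of a family of extended nonnegative reals,
with the usual modification (`sup`) when `q = ∞`. -/
noncomputable def lqSum {ι : Type*} (q : ℝ≥0∞) (a : ι → ℝ≥0∞) : ℝ≥0∞ :=
  if q = ∞ then ⨆ i, a i else (∑' i, a i ^ q.toReal) ^ (1 / q.toReal)

/-- The `L^p`-norm `(∫_A g^p dx)^{1/p}` over a set `A ⊆ ℝⁿ`, with the usual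
modification (`sup` over `x ∈ A`) when `p = ∞`. -/
noncomputable def lpIntOn {n : ℕ} (p : ℝ≥0∞) (A : Set (Fin n → ℝ))
    (g : (Fin n → ℝ) → ℝ≥0∞) : ℝ≥0∞ :=
  if p = ∞ then ⨆ x ∈ A, g x
  else (∫⁻ x in A, g x ^ p.toReal) ^ (1 / p.toReal)

/-- The Triebel–Lizorkin-type sequence norm
`‖t‖_{ḟ^{s,τ}_{p,q}} = sup_P |P|^{-τ} ( ∫_P ( Σ_{Q ⊆ P} [|Q|^{-s/n-1/2} |t_Q| χ_Q(x)]^q )^{p/q} dx )^{1/p}`,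
with the usual modifications when `p = ∞` or `q = ∞`. -/
noncomputable def fNorm (n : ℕ) (s τ : ℝ) (p q : ℝ≥0∞) (t : DyadicCube n → ℂ) : ℝ≥0∞ :=
  ⨆ P : DyadicCube n, P.vol ^ (-τ) *
    lpIntOn p P.toSet fun x =>
      lqSum q fun Q : {Q : DyadicCube n // Q.toSet ⊆ P.toSet} =>
        coeff s Q.1 * ‖t Q.1‖₊ * ind Q.1 x

/-- The Besov-type sequence norm
`‖t‖_{ḃ^{s,τ}_{p,q}} = sup_P |P|^{-τ} ( Σ_{j ≥ j_P} ( ∫_P [ Σ_{Q ⊆ P, ℓ(Q)=2^{-j}} |Q|^{-s/n-1/2} |t_Q| χ_Q(x) ]^p dx )^{q/p} )^{1/q}`,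
with the usual modifications when `p = ∞` or `q = ∞`. -/
noncomputable def bNorm (n : ℕ) (s τ : ℝ) (p q : ℝ≥0∞) (t : DyadicCube n → ℂ) : ℝ≥0∞ :=
  ⨆ P : DyadicCube n, P.vol ^ (-τ) *
    lqSum q fun j : {j : ℤ // P.j ≤ j} =>
      lpIntOn p P.toSet fun x =>
        ∑' Q : {Q : DyadicCube n // Q.toSet ⊆ P.toSet ∧ Q.j = j.1},
          coeff s Q.1 * ‖t Q.1‖₊ * ind Q.1 x

/-- The `ḟ^{σ}_{∞,∞} = ḃ^{σ}_{∞,∞}` sequence norm `sup_Q |Q|^{-σ/n - 1/2} |t_Q|`. -/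
noncomputable def supNorm (n : ℕ) (σ : ℝ) (t : DyadicCube n → ℂ) : ℝ≥0∞ :=
  ⨆ Q : DyadicCube n, coeff σ Q * ‖t Q‖₊

/-- The test sequence with `t_{R_j} = |R_j|^{s/n + 1/2 + τ - 1/p}` for
`R_j = [0,2^{-j})^n` (the dyadic cube with `k = 0`), and `t_Q = 0` otherwise. -/
noncomputable def testSeq (n : ℕ) (s τ p : ℝ) : DyadicCube n → ℂ := fun Q =>
  if Q.k = 0 then
    ((((2 : ℝ) ^ (-(Q.j : ℝ) * n)) ^ (s / n + 1 / 2 + τ - 1 / p) : ℝ) : ℂ)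
  else 0

/-- The cube `R_j = [0, 2^{-j})^n`. -/
def Rcube (n : ℕ) (j : ℤ) : DyadicCube n := ⟨j, 0⟩

/-!
Testing the supremum defining `‖t‖_{ḟ^{s,τ}_{p,q}}` on the cube `P = Q` and keeping only the
term `Q` of the inner `ℓ^q`-sum, the integrand is at least `|Q|^{-s/n-1/2} |t_Q|` on `Q`, so the
`L^p(Q)`-norm is at least `|Q|^{1/p} |Q|^{-s/n-1/2} |t_Q|`. Multiplying by `|Q|^{-τ}` gives
exactly `|Q|^{-(s+n(τ-1/p))/n-1/2} |t_Q|`.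
-/

namespace DyadicCube

variable {n : ℕ} (Q : DyadicCube n)

lemma toSet_eq_pi :
    Q.toSet = Set.univ.pi fun i =>
      Set.Ico ((Q.k i : ℝ) * (2 : ℝ) ^ (-Q.j)) (((Q.k i : ℝ) + 1) * (2 : ℝ) ^ (-Q.j)) := by
  ext x
  simp [toSet, Set.mem_pi]

lemma measurableSet_toSet : MeasurableSet Q.toSet := by
  rw [toSet_eq_pi]
  exact MeasurableSet.univ_pi fun _ => measurableSet_Ico

lemma nonempty_toSet : Q.toSet.Nonempty := by
  rw [toSet_eq_pi, Set.univ_pi_nonempty_iff]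
  intro i
  apply Set.nonempty_Ico.mpr
  have : (0 : ℝ) < 2 ^ (-Q.j) := zpow_pos two_pos _
  linarith

lemma volume_toSet : volume Q.toSet = Q.vol := by
  have hside : (2 : ℝ) ^ (-Q.j) = 2 ^ (-(Q.j : ℝ)) := by
    rw [← Real.rpow_intCast, Int.cast_neg]
  simp only [toSet_eq_pi, volume_pi_pi, Real.volume_Ico, add_mul, one_mul, add_sub_cancel_left,
    Finset.prod_const, Finset.card_univ, Fintype.card_fin, hside]
  rw [← ENNReal.ofReal_rpow_of_pos two_pos, vol, ENNReal.rpow_mul, ENNReal.rpow_natCast,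
    ENNReal.ofReal_ofNat]

lemma vol_ne_zero : Q.vol ≠ 0 := by
  simp [vol, ENNReal.rpow_eq_zero_iff]

lemma vol_ne_top : Q.vol ≠ ∞ := by
  simp [vol, ENNReal.rpow_eq_top_iff]

end DyadicCube

open DyadicCube

lemma coeff_add_mul {n : ℕ} (s a : ℝ) (Q : DyadicCube n) :
    coeff (s + n * a) Q = Q.vol ^ (-a) * coeff s Q := by
  rcases Nat.eq_zero_or_pos n with rfl | hn
  · simp [coeff, vol]
  · have hexp : -((s + n * a) / n) - 1 / 2 = -a + (-(s / n) - 1 / 2) := by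
      field_simp
      ring
    rw [coeff, coeff, hexp, ENNReal.rpow_add _ _ Q.vol_ne_zero Q.vol_ne_top]

lemma le_lqSum {ι : Type*} {q : ℝ≥0∞} (hq : q ≠ 0) (a : ι → ℝ≥0∞) (i : ι) :
    a i ≤ lqSum q a := by
  unfold lqSum
  split_ifs with h
  · exact le_iSup a i
  · have hr : 0 < q.toReal := ENNReal.toReal_pos hq h
    calc a i = (a i ^ q.toReal) ^ (1 / q.toReal) := by
          rw [← ENNReal.rpow_mul, mul_one_div_cancel hr.ne', ENNReal.rpow_one]
      _ ≤ (∑' j, a j ^ q.toReal) ^ (1 / q.toReal) := by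
          gcongr
          exact ENNReal.le_tsum i

-- For `p = ∞` the factor `volume A ^ (1 / p.toReal)` is `volume A ^ 0 = 1`.
lemma mul_volume_rpow_le_lpIntOn {n : ℕ} {p : ℝ≥0∞} (hp : p ≠ 0) {A : Set (Fin n → ℝ)}
    (hA : MeasurableSet A) (hA' : A.Nonempty) {g : (Fin n → ℝ) → ℝ≥0∞} {c : ℝ≥0∞}
    (hg : ∀ x ∈ A, c ≤ g x) :
    c * volume A ^ (1 / p.toReal) ≤ lpIntOn p A g := by
  unfold lpIntOn
  split_ifs with hp'
  · obtain ⟨x, hx⟩ := hA'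
    simpa [hp'] using le_iSup₂_of_le (f := fun x (_ : x ∈ A) => g x) x hx (hg x hx)
  · have hr : 0 < p.toReal := ENNReal.toReal_pos hp hp'
    calc c * volume A ^ (1 / p.toReal) = (∫⁻ _ in A, c ^ p.toReal) ^ (1 / p.toReal) := by
          rw [setLIntegral_const, ENNReal.mul_rpow_of_nonneg _ _ (by positivity),
            ← ENNReal.rpow_mul, mul_one_div_cancel hr.ne', ENNReal.rpow_one]
      _ ≤ (∫⁻ x in A, g x ^ p.toReal) ^ (1 / p.toReal) := by
          gcongr ?_ ^ _
          exact setLIntegral_mono' hA fun x hx => by gcongr; exact hg x hx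

lemma coeff_mul_nnnorm_le_lqSum {n : ℕ} {q : ℝ≥0∞} (hq : q ≠ 0) (s : ℝ) (t : DyadicCube n → ℂ)
    {P : DyadicCube n} {x : Fin n → ℝ} (hx : x ∈ P.toSet) :
    coeff s P * ‖t P‖₊ ≤ lqSum q fun Q : {Q : DyadicCube n // Q.toSet ⊆ P.toSet} =>
      coeff s Q.1 * ‖t Q.1‖₊ * ind Q.1 x := by
  simpa [ind, Set.indicator_of_mem hx] using
    le_lqSum hq (fun Q : {Q : DyadicCube n // Q.toSet ⊆ P.toSet} =>
      coeff s Q.1 * ‖t Q.1‖₊ * ind Q.1 x) ⟨P, subset_rfl⟩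

theorem stmt0_general (n : ℕ) (s τ : ℝ) (p q : ℝ≥0∞)
    (hp : 0 < p) (hq : 0 < q)
    (t : DyadicCube n → ℂ) :
    supNorm n (s + n * (τ - 1 / p.toReal)) t ≤ fNorm n s τ p q t := by
  refine iSup_le fun Q => ?_
  calc coeff (s + n * (τ - 1 / p.toReal)) Q * ‖t Q‖₊
      = Q.vol ^ (-τ) * (coeff s Q * ‖t Q‖₊ * volume Q.toSet ^ (1 / p.toReal)) := by
        rw [coeff_add_mul, neg_sub', sub_eq_add_neg, neg_neg,
          ENNReal.rpow_add _ _ Q.vol_ne_zero Q.vol_ne_top, volume_toSet]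
        ring
    _ ≤ Q.vol ^ (-τ) * lpIntOn p Q.toSet fun x =>
          lqSum q fun Q' : {Q' : DyadicCube n // Q'.toSet ⊆ Q.toSet} =>
            coeff s Q'.1 * ‖t Q'.1‖₊ * ind Q'.1 x := by
        gcongr
        exact mul_volume_rpow_le_lpIntOn hp.ne' Q.measurableSet_toSet Q.nonempty_toSet
          fun x hx => coeff_mul_nnnorm_le_lqSum hq.ne' s t hx
    _ ≤ fNorm n s τ p q t := le_iSup_of_le Q le_rfl

/-- for all `s ∈ ℝ`, `p ∈ (0,∞)`, `q ∈ (0,∞]`, `τ ∈ [0,∞)` and every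
sequence `t`, one has `‖t‖_{ḟ^{s+n(τ-1/p)}_{∞,∞}} ≤ ‖t‖_{ḟ^{s,τ}_{p,q}}`. -/
theorem stmt0 (n : ℕ) (hn : 0 < n) (s τ : ℝ) (p q : ℝ≥0∞)
    (hp : 0 < p) (hp' : p ≠ ∞) (hq : 0 < q) (hτ : 0 ≤ τ)
    (t : DyadicCube n → ℂ) :
    supNorm n (s + n * (τ - 1 / p.toReal)) t ≤ fNorm n s τ p q t :=
  stmt0_general n s τ p q hp hq t
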